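/- Let R₁ and R₂ be unambiguous regexes over Σ and suppose there exist words b, d, e, g such that c := d ++ e is nonempty, b ++ c^i ++ d ∈ L(R₁) for every i ∈ ℕ, and e ++ c^j ++ g ∈ L(R₂) for every j ∈ ℕ. Then the concatenation R₁·R₂ is infinitely ambiguous. (The ⟸ direction of the paper's Theorem 2(a), stated separately at the word level.) -/

import Mathlib

/-! Shared definitions: words, word power, parse trees of regular expressions,
(un)ambiguity, finite/infinite ambiguity, and the Brabrand–Thomsen overlap. -/

universe u

variable {α : Type u}

/-- `wpow w n` is the `n`-fold concatenation `w^n` of the word `w` with itself. -/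
def wpow (w : List α) : ℕ → List α
  | 0 => []
  | n + 1 => w ++ wpow w n

/-- Parse trees of a regular expression for a word, defined inductively:
the regex `ε` has a unique parse tree for the empty word; the character regex
for `a` has a unique parse tree for the word `[a]`; a parse tree of `R₁ + R₂`
(alternation) for `w` is a parse tree of `R₁` for `w` or a parse tree of `R₂`
for `w` (the two sides distinct); a parse tree of `R₁ * R₂` (concatenation)
for `w` is a decomposition `w = u ++ v` with parse trees of `R₁` for `u` and
of `R₂` for `v`; a parse tree of `R*` for `w` is a finite list of words
(possibly empty entries) concatenating to `w` with a parse tree of `R` for each. -/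
inductive ParseTree : RegularExpression α → List α → Type u where
  | eps : ParseTree RegularExpression.epsilon []
  | char (a : α) : ParseTree (RegularExpression.char a) [a]
  | plusLeft {R₁ R₂ : RegularExpression α} {w : List α} :
      ParseTree R₁ w → ParseTree (R₁ + R₂) w
  | plusRight {R₁ R₂ : RegularExpression α} {w : List α} :
      ParseTree R₂ w → ParseTree (R₁ + R₂) w
  | comp {R₁ R₂ : RegularExpression α} {u v : List α} :
      ParseTree R₁ u → ParseTree R₂ v → ParseTree (R₁ * R₂) (u ++ v)
  | starNil {R : RegularExpression α} : ParseTree R.star []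
  | starCons {R : RegularExpression α} {u v : List α} :
      ParseTree R u → ParseTree R.star v → ParseTree R.star (u ++ v)

/-- A regex is unambiguous if every word has at most one parse tree of it. -/
def Unambiguous (R : RegularExpression α) : Prop :=
  ∀ (w : List α) (t₁ t₂ : ParseTree R w), t₁ = t₂

/-- A regex is ambiguous if some word has two distinct parse trees of it. -/
def Ambiguous (R : RegularExpression α) : Prop :=
  ∃ (w : List α) (t₁ t₂ : ParseTree R w), t₁ ≠ t₂

/-- The word `w` has at least `k` distinct parse trees of `R`. -/
def HasAtLeastTrees (R : RegularExpression α) (w : List α) (k : ℕ) : Prop :=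
  ∃ l : List (ParseTree R w), l.Nodup ∧ k ≤ l.length

/-- Every word has at most `k` parse trees of `R`. -/
def BoundedBy (R : RegularExpression α) (k : ℕ) : Prop :=
  ∀ (w : List α) (l : List (ParseTree R w)), l.Nodup → l.length ≤ k

/-- `R` is finitely ambiguous: ambiguous, with a uniform bound on the number
of parse trees of any word. -/
def FinitelyAmbiguous (R : RegularExpression α) : Prop :=
  Ambiguous R ∧ ∃ k : ℕ, BoundedBy R k

/-- `R` is infinitely ambiguous: for every `k` some word has more than `k`
parse trees of `R`. -/
def InfinitelyAmbiguous (R : RegularExpression α) : Prop :=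
  ∀ k : ℕ, ∃ w : List α, HasAtLeastTrees R w (k + 1)

/-- Languages `L₁` and `L₂` overlap (nonemptiness of the Brabrand–Thomsen
overlap operator): there are words `x`, `y` and a nonempty word `a` with
`x ∈ L₁`, `x ++ a ∈ L₁`, `a ++ y ∈ L₂`, and `y ∈ L₂`. -/
def Overlaps (L₁ L₂ : Language α) : Prop :=
  ∃ x y a : List α, a ≠ [] ∧ x ∈ L₁ ∧ x ++ a ∈ L₁ ∧ a ++ y ∈ L₂ ∧ y ∈ L₂

/-!
For `i ≤ k` the word `b c^(k+1) g` splits as `(b c^i d) · (e c^(k-i) g)`, since `c = d e`.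
Each split is matched by `R₁ · R₂`, and the splits are told apart by the length
`|b| + i |c| + |d|` of their left factor, which is injective in `i` because `c ≠ ε`.
So this word has at least `k + 1` parse trees.
-/

theorem wpow_add (c : List α) (m n : ℕ) : wpow c (m + n) = wpow c m ++ wpow c n := by
  induction m with
  | zero => simp [wpow]
  | succ m ih => simp [Nat.succ_add, wpow, ih]

theorem wpow_succ_eq_of_le (c : List α) {i k : ℕ} (hi : i ≤ k) :
    wpow c (k + 1) = wpow c i ++ c ++ wpow c (k - i) := by
  obtain ⟨j, rfl⟩ := Nat.exists_eq_add_of_le hi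
  rw [Nat.add_sub_cancel_left, Nat.add_assoc, wpow_add]
  simp [wpow]

theorem length_wpow (c : List α) (n : ℕ) : (wpow c n).length = n * c.length := by
  induction n with
  | zero => simp [wpow]
  | succ n ih => simp [wpow, ih]; ring

namespace ParseTree

theorem nonempty_star_flatten {R : RegularExpression α} :
    ∀ {L : List (List α)}, (∀ y ∈ L, Nonempty (ParseTree R y)) →
      Nonempty (ParseTree R.star L.flatten)
  | [], _ => ⟨starNil⟩
  | y :: _, h => ⟨starCons (h y List.mem_cons_self).some
      (nonempty_star_flatten fun z hz => h z (List.mem_cons_of_mem y hz)).some⟩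

theorem nonempty_of_mem_matches' :
    ∀ {R : RegularExpression α} {w : List α}, w ∈ R.matches' → Nonempty (ParseTree R w)
  | .zero, _, hw => absurd hw (Set.notMem_empty _)
  | .epsilon, _, hw => by
    change _ ∈ (1 : Language α) at hw
    rw [Language.mem_one] at hw
    exact hw ▸ ⟨eps⟩
  | .char a, _, hw => by
    rw [RegularExpression.matches'_char] at hw
    exact (Set.mem_singleton_iff.mp hw) ▸ ⟨char a⟩
  | .plus _ _, _, hw => hw.elim
      (fun h => ⟨plusLeft (nonempty_of_mem_matches' h).some⟩)
      (fun h => ⟨plusRight (nonempty_of_mem_matches' h).some⟩)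
  | .comp _ _, _, ⟨_, hu, _, hv, rfl⟩ =>
    ⟨comp (nonempty_of_mem_matches' hu).some (nonempty_of_mem_matches' hv).some⟩
  | .star _, _, hw => by
    obtain ⟨L, rfl, hL⟩ := Language.mem_kstar.mp hw
    exact nonempty_star_flatten fun y hy => nonempty_of_mem_matches' (hL y hy)

def leftLength : {R : RegularExpression α} → {w : List α} → ParseTree R w → ℕ
  | _, _, comp (u := u) _ _ => u.length
  | _, _, _ => 0

theorem leftLength_cast {R : RegularExpression α} {w w' : List α} (h : w = w')
    (t : ParseTree R w) : leftLength (h ▸ t) = leftLength t := by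
  subst h; rfl

end ParseTree

open ParseTree in
theorem hasAtLeastTrees_comp {R₁ R₂ : RegularExpression α} {w : List α} {n : ℕ}
    (u v : Fin n → List α) (hw : ∀ i, u i ++ v i = w)
    (hu : ∀ i, u i ∈ R₁.matches') (hv : ∀ i, v i ∈ R₂.matches')
    (hlen : Function.Injective fun i => (u i).length) :
    HasAtLeastTrees (R₁ * R₂) w n := by
  let tree : Fin n → ParseTree (R₁ * R₂) w := fun i =>
    hw i ▸ comp (nonempty_of_mem_matches' (hu i)).some (nonempty_of_mem_matches' (hv i)).some
  have h_leftLength : ∀ i, leftLength (tree i) = (u i).length := fun i =>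
    leftLength_cast (hw i) _
  refine ⟨List.ofFn tree, List.nodup_ofFn.mpr fun i j hij => hlen ?_, by simp⟩
  simpa only [h_leftLength] using congrArg leftLength hij

theorem stmt_17_general {α : Type u} (R₁ R₂ : RegularExpression α)
    (b d e g : List α) (hc : d ++ e ≠ [])
    (hR₁ : ∀ i : ℕ, b ++ wpow (d ++ e) i ++ d ∈ R₁.matches')
    (hR₂ : ∀ j : ℕ, e ++ wpow (d ++ e) j ++ g ∈ R₂.matches') :
    InfinitelyAmbiguous (R₁ * R₂) := by
  intro k
  refine ⟨b ++ wpow (d ++ e) (k + 1) ++ g, hasAtLeastTrees_comp (n := k + 1)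
    (fun i => b ++ wpow (d ++ e) i ++ d) (fun i => e ++ wpow (d ++ e) (k - i) ++ g)
    ?split (fun i => hR₁ i) (fun i => hR₂ (k - i)) ?injective⟩
  case split =>
    intro i
    simp [wpow_succ_eq_of_le (d ++ e) (Nat.lt_succ_iff.mp i.isLt)]
  case injective =>
    intro i j hij
    have hc_pos : 0 < (d ++ e).length := List.length_pos_iff.mpr hc
    simp only [List.length_append, length_wpow] at hij hc_pos
    exact Fin.ext (Nat.eq_of_mul_eq_mul_right hc_pos (by omega))

/-- ⟸ direction of Theorem 2(a): for unambiguous `R₁`, `R₂`, if there are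
words `b d e g` with `c := d ++ e` nonempty, `b ++ c^i ++ d ∈ L(R₁)` for all
`i`, and `e ++ c^j ++ g ∈ L(R₂)` for all `j`, then `R₁·R₂` is infinitely
ambiguous. -/
theorem stmt_17 {α : Type u} (R₁ R₂ : RegularExpression α)
    (h₁ : Unambiguous R₁) (h₂ : Unambiguous R₂)
    (b d e g : List α) (hc : d ++ e ≠ [])
    (hR₁ : ∀ i : ℕ, b ++ wpow (d ++ e) i ++ d ∈ R₁.matches')
    (hR₂ : ∀ j : ℕ, e ++ wpow (d ++ e) j ++ g ∈ R₂.matches') :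
    InfinitelyAmbiguous (R₁ * R₂) :=
  stmt_17_general R₁ R₂ b d e g hc hR₁ hR₂
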